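/- arXiv:math/0311370 — 2 statements merged into one kernel-verified Lean document; each statement's English description precedes it below -/
import Mathlib

section
/- Let M be a matroid on a finite ground set E, let ω be a weight function with flag ∅ = F_0 ⊂ F_1 ⊂ ⋯ ⊂ F_{k+1} = E, and let M_ω be the matroid on E whose bases are the ω-minimum bases of M. Then a set S ⊆ E is a flat of M_ω if and only if for every i with 1 ≤ i ≤ k+1, the set S ∩ (F_i ∖ F_{i−1}) is a flat of the minor (M ↾ F_i) ／ F_{i−1}. Consequently, the map S ↦ (S ∩ (F_i ∖ F_{i−1}))_{1 ≤ i ≤ k+1} is an order isomorphism from the lattice of flats of M_ω (ordered by inclusion) onto the product of the lattices of flats of the minors (M ↾ F_i) ／ F_{i−1}. -/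
open Matroid
open Set

/-- The ω-weight of a set `B`: the sum of `ω` over the elements of `B`. -/
noncomputable def baseWeight {α : Type*} (ω : α → ℝ) (B : Set α) : ℝ := ∑ᶠ e ∈ B, ω e

/-- `B` is an ω-minimum base of `M`: it is a base whose ω-weight is
minimal among all bases of `M`. -/
def IsMinBase {α : Type*} (M : Matroid α) (ω : α → ℝ) (B : Set α) : Prop :=
  M.IsBase B ∧ ∀ B', M.IsBase B' → baseWeight ω B ≤ baseWeight ω B'

/-- The contraction `M ／ C` of the set `C` in the matroid `M`, defined as the dual of the
restriction of the dual of `M` to the complement of `C`. -/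
noncomputable def Matroid.dualContract {α : Type*} (M : Matroid α) (C : Set α) : Matroid α :=
  (M✶ ↾ (M.E \ C))✶

lemma contract_ground' {α : Type*} (M : Matroid α) (C : Set α) :
    (M.dualContract C).E = M.E \ C := rfl

lemma contract_base_iff' {α : Type*} (M : Matroid α) {C : Set α} (hC : C ⊆ M.E) {B : Set α} :
    (M.dualContract C).IsBase B ↔ B ⊆ M.E \ C ∧ ∃ J, M.IsBasis J C ∧ M.IsBase (B ∪ J) := by
  set D := M.E \ C with hD
  have hDE : D ⊆ M.E := diff_subset
  have hcompl : M.E \ D = C := by rw [hD, diff_diff_cancel_left hC]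
  constructor
  · intro h
    have hBD : B ⊆ D := h.subset_ground
    have h1 : (M✶ ↾ D).IsBase (D \ B) := by
      have := (dual_isBase_iff' (M := M✶ ↾ D)).mp h
      simpa using this.1
    have hBas : M✶.IsBasis (D \ B) D := by
      rwa [isBase_restrict_iff (show D ⊆ M✶.E from hDE)] at h1
    obtain ⟨B', hB', hIB⟩ := hBas.exists_isBase
    have hBX : M✶.IsBasis (B' ∩ D) D := by rwa [← hIB]
    have h2 := hB'.compl_inter_isBasis_of_inter_isBasis hBX
    rw [dual_dual, dual_ground, hcompl] at h2
    refine ⟨hBD, (M.E \ B') ∩ C, h2, ?_⟩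
    have hBeq : B ∪ (M.E \ B') ∩ C = M.E \ B' := by
      have hpt := Set.ext_iff.mp hIB
      ext x
      have h1x := hpt x
      have hBx : x ∈ B → x ∈ M.E ∧ x ∉ C := fun hx => by simpa [hD] using hBD hx
      simp only [mem_diff, mem_inter_iff, mem_union, hD] at h1x ⊢
      by_cases hxC : x ∈ C <;> by_cases hxE : x ∈ M.E <;> tauto
    rw [hBeq]
    exact hB'.compl_isBase_of_dual
  · rintro ⟨hBD, J, hJ, hBJ⟩
    have hJC := hJ.subset
    have hBC : Disjoint B C := disjoint_of_subset_left hBD disjoint_sdiff_left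
    have h1 : (B ∪ J) ∩ C = J := by
      ext x
      have hBx : x ∈ B → x ∉ C := fun hx hc => hBC.ne_of_mem hx hc rfl
      have hJx : x ∈ J → x ∈ C := fun hx => hJC hx
      simp only [mem_inter_iff, mem_union]
      tauto
    have h2 := hBJ.compl_inter_isBasis_of_inter_isBasis (by rw [h1]; exact hJ)
    have h3 : (M.E \ (B ∪ J)) ∩ (M.E \ C) = D \ B := by
      ext x
      have hJx : x ∈ J → x ∈ C := fun hx => hJC hx
      simp only [mem_diff, mem_inter_iff, mem_union, hD]
      tauto
    rw [h3] at h2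
    rw [show M.dualContract C = (M✶ ↾ D)✶ from rfl, dual_isBase_iff (by simpa using hBD)]
    rw [show (M✶ ↾ D).E = D from rfl]
    rwa [isBase_restrict_iff (show D ⊆ M✶.E from hDE)]

lemma contract_base_forall' {α : Type*} {M : Matroid α} {C B J₀ : Set α}
    (hfin : M.E.Finite) (hC : C ⊆ M.E)
    (h : (M.dualContract C).IsBase B) (hJ₀ : M.IsBasis J₀ C) : M.IsBase (B ∪ J₀) := by
  obtain ⟨hBD, J, hJ, hBJ⟩ := (contract_base_iff' M hC).mp h
  have hJC := hJ.subset
  have hJ₀C := hJ₀.subset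
  have hBC : Disjoint B C := disjoint_of_subset_left hBD disjoint_sdiff_left
  -- spanning
  have hclJ : M.closure J = M.closure C := hJ.closure_eq_closure
  have hclJ₀ : M.closure J₀ = M.closure C := hJ₀.closure_eq_closure
  have hsp : M.E ⊆ M.closure (B ∪ J₀) := by
    have h1 : M.closure (B ∪ J₀) = M.closure (B ∪ J) := by
      rw [← closure_union_closure_right_eq, hclJ₀, ← hclJ, closure_union_closure_right_eq]
    rw [h1, hBJ.closure_eq]
  have hspan : M.Spanning (B ∪ J₀) := by
    rw [spanning_iff_ground_subset_closure (union_subset (hBD.trans diff_subset) (hJ₀C.trans hC))]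
    exact hsp
  obtain ⟨B₁, hB₁, hB₁sub⟩ := hspan.exists_isBase_subset
  have hfinBJ : (B ∪ J₀).Finite := hfin.subset (union_subset (hBD.trans diff_subset) (hJ₀C.trans hC))
  have hcard : (B ∪ J₀).encard ≤ B₁.encard := by
    rw [encard_union_eq (disjoint_of_subset_right hJ₀C hBC),
      hJ₀.encard_eq_encard hJ, ← encard_union_eq (disjoint_of_subset_right hJC hBC),
      hBJ.encard_eq_encard_of_isBase hB₁]
  rw [← hfinBJ.eq_of_subset_of_encard_le' hB₁sub hcard]
  exact hB₁

lemma disjointSigma_flat_iff' {α ι : Type*} (Ms : ι → Matroid α)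
    (hdj : Pairwise (Function.onFun Disjoint fun i => (Ms i).E)) {S : Set α}
    (hS : S ⊆ ⋃ i, (Ms i).E) :
    (Matroid.disjointSigma Ms hdj).IsFlat S ↔ ∀ i, (Ms i).IsFlat (S ∩ (Ms i).E) := by
  have hcomp : ∀ (T : ι → Set α), (∀ j, T j ⊆ (Ms j).E) → ∀ j, (⋃ l, T l) ∩ (Ms j).E = T j := by
    intro T hT j
    ext x
    simp only [mem_inter_iff, mem_iUnion]
    constructor
    · rintro ⟨⟨l, hxl⟩, hxE⟩
      rcases eq_or_ne l j with rfl | hne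
      · exact hxl
      · exact absurd rfl (((hdj hne).ne_of_mem (hT l hxl) hxE))
    · exact fun hx => ⟨⟨j, hx⟩, hT j hx⟩
  constructor
  · intro hflat i
    refine ⟨?_, inter_subset_right⟩
    intro I X hI hX
    have hXE : X ⊆ (Ms i).E := hX.subset_ground
    choose I_ hI_ using fun j => (Ms j).exists_isBasis (S ∩ (Ms j).E) inter_subset_right
    classical
    set T : ι → Set α := fun j => if j = i then I else I_ j with hT
    have hTsub : ∀ j, T j ⊆ (Ms j).E := by
      intro j
      rcases eq_or_ne j i with rfl | hne
      · simpa [hT] using hI.indep.subset_ground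
      · simpa [hT, hne] using (hI_ j).indep.subset_ground
    have hTbasis : ∀ j, (Ms j).IsBasis (T j) (S ∩ (Ms j).E) := by
      intro j
      rcases eq_or_ne j i with rfl | hne
      · simpa [hT] using hI
      · simpa [hT, hne] using hI_ j
    have hb1 : (Matroid.disjointSigma Ms hdj).IsBasis (⋃ l, T l) S := by
      rw [disjointSigma_isBasis_iff]
      refine ⟨fun j => by rw [hcomp T hTsub j]; exact hTbasis j, ?_, hS⟩
      exact iUnion_subset fun j => (hTbasis j).subset.trans inter_subset_left
    have hb2 : (Matroid.disjointSigma Ms hdj).IsBasis (⋃ l, T l) (S ∪ X) := by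
      rw [disjointSigma_isBasis_iff]
      refine ⟨?_, ?_, ?_⟩
      · intro j
        rcases eq_or_ne j i with rfl | hne
        · have : (S ∪ X) ∩ (Ms j).E = (S ∩ (Ms j).E) ∪ X := by
            rw [union_inter_distrib_right, inter_eq_left.mpr hXE]
          rw [hcomp T hTsub j, this]
          have hTj : T j = I := by rw [hT]; simp
          rw [hTj]
          exact hI.isBasis_union hX
        · have : (S ∪ X) ∩ (Ms j).E = S ∩ (Ms j).E := by
            rw [union_inter_distrib_right]
            have : X ∩ (Ms j).E = ∅ := by
              apply eq_empty_of_subset_empty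
              intro x ⟨hx1, hx2⟩
              exact absurd rfl ((hdj hne.symm).symm.ne_of_mem hx2 (hXE hx1))
            rw [this, union_empty]
          rw [hcomp T hTsub j, this]
          exact hTbasis j
      · exact iUnion_subset fun j =>
          ((hTbasis j).subset.trans inter_subset_left).trans subset_union_left
      · exact union_subset hS (hXE.trans (subset_iUnion (fun l => (Ms l).E) i))
    have := hflat.subset_of_isBasis_of_isBasis hb1 hb2
    exact subset_inter ((subset_union_right).trans this) hXE
  · intro h
    refine ⟨?_, by rwa [disjointSigma_ground_eq]⟩
    intro I X hI hX
    rw [disjointSigma_isBasis_iff] at hI hX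
    intro x hx
    obtain ⟨j, hj⟩ := mem_iUnion.mp (hX.2.2 hx)
    have : X ∩ (Ms j).E ⊆ S ∩ (Ms j).E :=
      (h j).subset_of_isBasis_of_isBasis (hI.1 j) (hX.1 j)
    exact (this ⟨hx, hj⟩).1

lemma baseWeight_finset {α : Type*} (ω : α → ℝ) (s : Finset α) :
    baseWeight ω ↑s = ∑ e ∈ s, ω e := by
  rw [baseWeight, finsum_mem_coe_finset]

lemma baseWeight_exchange {α : Type*} (ω : α → ℝ) {B : Set α} (hB : B.Finite) {x y : α}
    (hx : x ∈ B) (hy : y ∉ B) :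
    baseWeight ω (insert y B \ {x}) = baseWeight ω B + ω y - ω x := by
  classical
  have h1 : insert y B \ {x} = ↑((insert y hB.toFinset).erase x) := by
    simp [Finset.coe_erase, hB.coe_toFinset]
  have h2 : baseWeight ω B = ∑ e ∈ hB.toFinset, ω e := by
    rw [← baseWeight_finset, hB.coe_toFinset]
  rw [h1, baseWeight_finset, h2]
  rw [Finset.sum_erase_eq_sub (by simp [hB.mem_toFinset, hx]),
    Finset.sum_insert (by simp [hB.mem_toFinset, hy])]
  ring

lemma baseWeight_partition {α ι : Type*} [Fintype ι] (ω : α → ℝ) {B : Set α} (hB : B.Finite)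
    (P : ι → Set α) (hdj : Pairwise (Function.onFun Disjoint P)) (c : ι → ℝ)
    (hc : ∀ j, ∀ x ∈ P j, ω x = c j) (hcov : B ⊆ ⋃ j, P j) :
    baseWeight ω B = ∑ j, c j * ((B ∩ P j).ncard : ℝ) := by
  classical
  have h0 : baseWeight ω B = ∑ e ∈ hB.toFinset, ω e := by
    rw [← baseWeight_finset, hB.coe_toFinset]
  rw [h0]
  have hsplit : hB.toFinset = Finset.univ.biUnion (fun j => hB.toFinset.filter (· ∈ P j)) := by
    ext x
    simp only [Finset.mem_biUnion, Finset.mem_filter, Finset.mem_univ, true_and,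
      hB.mem_toFinset]
    constructor
    · intro hx
      obtain ⟨j, hj⟩ := mem_iUnion.mp (hcov hx)
      exact ⟨j, hx, hj⟩
    · rintro ⟨j, hj, -⟩; exact hj
  rw [hsplit, Finset.sum_biUnion ?hd]
  case hd =>
    intro i _ j _ hij
    exact Finset.disjoint_left.mpr fun x hxi hxj =>
      (hdj hij).ne_of_mem (Finset.mem_filter.mp hxi).2 (Finset.mem_filter.mp hxj).2 rfl
  apply Finset.sum_congr rfl
  intro j _
  rw [Finset.sum_congr rfl (fun x hx => hc j x (Finset.mem_filter.mp hx).2),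
    Finset.sum_const, nsmul_eq_mul, mul_comm]
  congr 2
  have hBP : B ∩ P j = ↑(hB.toFinset.filter (· ∈ P j)) := by
    ext x; simp [hB.mem_toFinset]
  rw [hBP, Set.ncard_coe_finset]

lemma mem_piece_iff' {α : Type*} (M : Matroid α)
    (ω : α → ℝ) (k : ℕ) (a : Fin (k + 1) → ℝ) (ha : StrictMono a)
    (hvals : ω '' M.E = Set.range a)
    (F : ℕ → Set α) (hF0 : F 0 = ∅)
    (hFsub : ∀ i : Fin (k + 1), F (i + 1 : ℕ) = {x ∈ M.E | ω x ≤ a i})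
    (j : Fin (k + 1)) (x : α) :
    x ∈ F (j + 1 : ℕ) \ F (j : ℕ) ↔ x ∈ M.E ∧ ω x = a j := by
  have hF1 : ∀ u (hu : u < k + 1), F (u + 1) = {y ∈ M.E | ω y ≤ a ⟨u, hu⟩} :=
    fun u hu => hFsub ⟨u, hu⟩
  have hωE : ∀ y ∈ M.E, ∃ m : Fin (k + 1), ω y = a m := by
    intro y hy
    have : ω y ∈ Set.range a := by rw [← hvals]; exact mem_image_of_mem ω hy
    obtain ⟨m, hm⟩ := this
    exact ⟨m, hm.symm⟩
  obtain ⟨v, hv⟩ := j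
  show x ∈ F (v + 1) \ F v ↔ x ∈ M.E ∧ ω x = a ⟨v, hv⟩
  match v, hv with
  | 0, hv =>
    rw [hF0, diff_empty, hF1 0 hv]
    simp only [mem_setOf_eq, and_congr_right_iff]
    intro hxE
    constructor
    · intro hle
      obtain ⟨m, hm⟩ := hωE x hxE
      rw [hm] at hle ⊢
      congr 1
      have h1 : (m : ℕ) ≤ 0 := (ha.le_iff_le).mp hle
      exact Fin.ext (show (m : ℕ) = 0 by omega)
    · intro h; rw [h]
  | u + 1, hv =>
    have hu : u < k + 1 := by omega
    rw [hF1 (u + 1) hv, hF1 u hu]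
    simp only [mem_diff, mem_setOf_eq]
    constructor
    · rintro ⟨⟨hxE, hle⟩, hnot⟩
      obtain ⟨m, hm⟩ := hωE x hxE
      refine ⟨hxE, ?_⟩
      rw [hm] at hle ⊢
      congr 1
      have h1 : (m : ℕ) ≤ u + 1 := ha.le_iff_le.mp hle
      have h2 : ¬ m ≤ ⟨u, hu⟩ := fun h => hnot ⟨hxE, by rw [hm]; exact ha.monotone h⟩
      have h2' : ¬ (m : ℕ) ≤ u := h2
      exact Fin.ext (show (m : ℕ) = u + 1 by omega)
    · rintro ⟨hxE, heq⟩
      refine ⟨⟨hxE, le_of_eq heq⟩, ?_⟩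
      rintro ⟨-, hle⟩
      rw [heq] at hle
      have h3 : u + 1 ≤ u := ha.le_iff_le.mp hle
      omega

lemma isMinBase_iff' {α : Type*} (M : Matroid α) (hfin : M.E.Finite)
    (ω : α → ℝ) (k : ℕ) (a : Fin (k + 1) → ℝ) (ha : StrictMono a)
    (hvals : ω '' M.E = Set.range a)
    (F : ℕ → Set α) (hF0 : F 0 = ∅)
    (hFsub : ∀ i : Fin (k + 1), F (i + 1 : ℕ) = {x ∈ M.E | ω x ≤ a i})
    (B : Set α) :
    IsMinBase M ω B ↔
      M.IsBase B ∧ ∀ j : Fin (k + 1), M.IsBasis (B ∩ F (j + 1 : ℕ)) (F (j + 1 : ℕ)) := by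
  have hF1 : ∀ u (hu : u < k + 1), F (u + 1) = {y ∈ M.E | ω y ≤ a ⟨u, hu⟩} :=
    fun u hu => hFsub ⟨u, hu⟩
  have hFE1 : ∀ i : Fin (k + 1), F (i + 1 : ℕ) ⊆ M.E := fun i => by
    rw [hFsub i]; exact sep_subset _ _
  have hP := mem_piece_iff' M ω k a ha hvals F hF0 hFsub
  have hPdisj : Pairwise (Function.onFun Disjoint
      fun j : Fin (k + 1) => F (j + 1 : ℕ) \ F (j : ℕ)) := by
    intro i j hij
    rw [Function.onFun, disjoint_left]
    intro x hxi hxj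
    rw [hP i x] at hxi
    rw [hP j x] at hxj
    exact hij (ha.injective (hxi.2.symm.trans hxj.2))
  have hstep : ∀ j : Fin (k + 1), F (j : ℕ) ⊆ F (j + 1 : ℕ) := by
    rintro ⟨v, hv⟩
    show F v ⊆ F (v + 1)
    match v, hv with
    | 0, hv => rw [hF0]; exact empty_subset _
    | u + 1, hv =>
      have hu : u < k + 1 := by omega
      intro x hx
      rw [hF1 u hu] at hx
      rw [hF1 (u + 1) hv]
      exact ⟨hx.1, hx.2.trans (ha.monotone (show (⟨u, hu⟩ : Fin (k+1)) ≤ ⟨u+1, hv⟩ from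
        Nat.le_succ u))⟩
  have hfwd : ∀ B, IsMinBase M ω B →
      ∀ j : Fin (k + 1), M.IsBasis (B ∩ F (j + 1 : ℕ)) (F (j + 1 : ℕ)) := by
    rintro B ⟨hB, hmin⟩ j
    have hXE : F (j + 1 : ℕ) ⊆ M.E := hFE1 j
    have hind : M.Indep (B ∩ F (j + 1 : ℕ)) := hB.indep.subset inter_subset_left
    refine hind.isBasis_of_subset_of_subset_closure inter_subset_right ?_
    by_contra hcon
    obtain ⟨y, hyX, hycl⟩ := not_subset.mp hcon
    have hyE : y ∈ M.E := hXE hyX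
    have hyB : y ∉ B := fun hyB =>
      hycl (M.subset_closure (B ∩ F (j + 1 : ℕ)) hind.subset_ground ⟨hyB, hyX⟩)
    have hI : M.Indep (insert y (B ∩ F (j + 1 : ℕ))) := by
      rw [hind.insert_indep_iff_of_notMem (fun h => hyB h.1)]
      exact ⟨hyE, hycl⟩
    obtain ⟨J, hJbasis, hIJ⟩ := hI.subset_isBasis_of_subset
      (insert_subset_insert inter_subset_left) (insert_subset hyE hB.subset_ground)
    have hJbase : M.IsBase J := by
      refine hJbasis.indep.isBase_of_ground_subset_closure ?_
      rw [hJbasis.closure_eq_closure]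
      exact hB.closure_eq ▸ M.closure_subset_closure (subset_insert y B)
    have hdep : ¬ M.Indep (insert y B) := fun h => (hB.insert_dep ⟨hyE, hyB⟩).not_indep h
    have hJne : J ≠ insert y B := fun h => hdep (h ▸ hJbasis.indep)
    obtain ⟨x, hxyB, hxJ⟩ := exists_of_ssubset (ssubset_of_ne_of_subset hJne hJbasis.subset)
    have hyJ : y ∈ J := hIJ (mem_insert y _)
    have hxy : x ≠ y := fun h => hxJ (h ▸ hyJ)
    have hxB : x ∈ B := (mem_insert_iff.mp hxyB).resolve_left hxy
    have hxX : x ∉ F (j + 1 : ℕ) := fun hxX => hxJ (hIJ (mem_insert_of_mem _ ⟨hxB, hxX⟩))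
    have hBfin : B.Finite := hfin.subset hB.subset_ground
    have hJeq : J = insert y B \ {x} := by
      have hsub : J ⊆ insert y B \ {x} := subset_diff_singleton hJbasis.subset hxJ
      have hfin2 : (insert y B \ {x}).Finite := (hBfin.insert y).diff
      refine hfin2.eq_of_subset_of_encard_le' hsub ?_
      rw [encard_diff_singleton_of_mem hxyB, encard_insert_of_notMem hyB,
        hJbase.encard_eq_encard_of_isBase hB]
      exact tsub_le_iff_right.mpr le_rfl
    have hw : baseWeight ω J = baseWeight ω B + ω y - ω x := by
      rw [hJeq]; exact baseWeight_exchange ω hBfin hxB hyB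
    have hyw : ω y ≤ a j := by
      have : y ∈ {x ∈ M.E | ω x ≤ a j} := by rw [← hFsub j]; exact hyX
      exact this.2
    have hxw : a j < ω x := by
      have hxE : x ∈ M.E := hB.subset_ground hxB
      by_contra hle
      push_neg at hle
      exact hxX (by rw [hFsub j]; exact ⟨hxE, hle⟩)
    have := hmin J hJbase
    rw [hw] at this
    linarith
  constructor
  · intro h
    exact ⟨h.1, hfwd B h⟩
  · rintro ⟨hB, hbasis⟩
    have hbases_fin : {B' | M.IsBase B'}.Finite :=
      hfin.finite_subsets.subset (fun B' hB' => hB'.subset_ground)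
    obtain ⟨B₀, hB₀mem, hB₀min⟩ :=
      Set.exists_min_image _ (baseWeight ω) hbases_fin M.exists_isBase
    have hmin₀ : IsMinBase M ω B₀ := ⟨hB₀mem, fun B' h' => hB₀min B' h'⟩
    have hbasis₀ := hfwd B₀ hmin₀
    have hwf : ∀ B', M.IsBase B' → baseWeight ω B' =
        ∑ j : Fin (k + 1), a j * (((B' ∩ (F (j + 1 : ℕ) \ F (j : ℕ))).ncard : ℝ)) := by
      intro B' hB'
      refine baseWeight_partition ω (hfin.subset hB'.subset_ground) _ hPdisj a ?_ ?_
      · intro j x hx; exact ((hP j x).mp hx).2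
      · intro x hx
        have hxE := hB'.subset_ground hx
        have : ω x ∈ Set.range a := by rw [← hvals]; exact mem_image_of_mem ω hxE
        obtain ⟨m, hm⟩ := this
        exact mem_iUnion.mpr ⟨m, (hP m x).mpr ⟨hxE, hm.symm⟩⟩
    have hcard : ∀ v, v ≤ k + 1 → (B ∩ F v).encard = (B₀ ∩ F v).encard := by
      intro v hv
      match v, hv with
      | 0, _ => rw [hF0]; simp
      | u + 1, hv =>
        have hu : u < k + 1 := by omega
        exact (hbasis ⟨u, hu⟩).encard_eq_encard (hbasis₀ ⟨u, hu⟩)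
    have hweq : baseWeight ω B = baseWeight ω B₀ := by
      rw [hwf B hB, hwf B₀ hB₀mem]
      apply Finset.sum_congr rfl
      intro j _
      congr 2
      have hset : ∀ B' : Set α,
          B' ∩ (F (j + 1 : ℕ) \ F (j : ℕ)) = (B' ∩ F (j + 1 : ℕ)) \ (B' ∩ F (j : ℕ)) := by
        intro B'; ext x; simp only [mem_inter_iff, mem_diff]; tauto
      have hd : ∀ B' : Set α, B' ⊆ M.E → M.IsBase B' →
          (B' ∩ (F (j + 1 : ℕ) \ F (j : ℕ))).encard
            = (B' ∩ F (j + 1 : ℕ)).encard - (B' ∩ F (j : ℕ)).encard := by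
        intro B' hB'E _
        rw [hset B']
        have hsub : B' ∩ F (j : ℕ) ⊆ B' ∩ F (j + 1 : ℕ) :=
          inter_subset_inter_right _ (hstep j)
        have hfin3 : (B' ∩ F (j : ℕ)).encard ≠ ⊤ :=
          (hfin.subset (inter_subset_left.trans hB'E)).encard_lt_top.ne
        rw [← encard_diff_add_encard_of_subset hsub, (ENat.addLECancellable_of_ne_top hfin3).add_tsub_cancel_right]
      rw [Set.ncard_def, Set.ncard_def, hd B hB.subset_ground hB,
        hd B₀ hB₀mem.subset_ground hB₀mem, hcard (↑j + 1) (by omega), hcard (↑j) (by omega)]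
    exact ⟨hB, fun B' hB' => hweq ▸ hB₀min B' hB'⟩


/-- Let `ω` be a weight function whose distinct values on the ground set `M.E` are
`a 0 < a 1 < ⋯ < a k`, let `∅ = F 0 ⊂ F 1 ⊂ ⋯ ⊂ F (k+1) = M.E` be the flag of sublevel
sets of `ω`, and let `Mω` be the matroid on `M.E` whose bases are the ω-minimum bases
of `M`.  Then `S ⊆ M.E` is a flat of `Mω` iff each `S ∩ (F i \ F (i-1))` is a flat of
the minor `(M ↾ F i) ／ F (i-1)`, and consequently
`S ↦ (S ∩ (F i \ F (i-1)))_{1 ≤ i ≤ k+1}` is an order isomorphism from the lattice of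
flats of `Mω` onto the product of the lattices of flats of these minors. -/
theorem flat_minBase_matroid_iff_and_orderIso {α : Type*} (M : Matroid α)
    (hfin : M.E.Finite)
    (ω : α → ℝ) (k : ℕ) (a : Fin (k + 1) → ℝ) (ha : StrictMono a)
    (hvals : ω '' M.E = Set.range a)
    (F : ℕ → Set α) (hF0 : F 0 = ∅)
    (hFsub : ∀ i : Fin (k + 1), F (i + 1 : ℕ) = {x ∈ M.E | ω x ≤ a i})
    (Mω : Matroid α) (hMωE : Mω.E = M.E)
    (hMωBase : ∀ B : Set α, Mω.IsBase B ↔ IsMinBase M ω B) :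
    (∀ S : Set α, S ⊆ M.E →
      (Mω.IsFlat S ↔ ∀ i ∈ Finset.Icc 1 (k + 1),
        ((M ↾ F i).dualContract (F (i - 1))).IsFlat (S ∩ (F i \ F (i - 1))))) ∧
    ∃ φ : {S : Set α // Mω.IsFlat S} ≃o
        (∀ i : Fin (k + 1), {T : Set α // ((M ↾ F (i + 1 : ℕ)).dualContract (F i)).IsFlat T}),
      ∀ (S : {S : Set α // Mω.IsFlat S}) (i : Fin (k + 1)),
        (φ S i : Set α) = (S : Set α) ∩ (F (i + 1 : ℕ) \ F i) := by
  classical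
  set N : Fin (k + 1) → Matroid α :=
    fun j => (M ↾ F (j + 1 : ℕ)).dualContract (F (j : ℕ)) with hN
  set P : Fin (k + 1) → Set α := fun j => F (j + 1 : ℕ) \ F (j : ℕ) with hPdef
  have hF1 : ∀ u (hu : u < k + 1), F (u + 1) = {y ∈ M.E | ω y ≤ a ⟨u, hu⟩} :=
    fun u hu => hFsub ⟨u, hu⟩
  have hFE1 : ∀ i : Fin (k + 1), F (i + 1 : ℕ) ⊆ M.E := fun i => by
    rw [hFsub i]; exact sep_subset _ _
  have hP := mem_piece_iff' M ω k a ha hvals F hF0 hFsub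
  have hPdisj : Pairwise (Function.onFun Disjoint P) := by
    intro i j hij
    rw [Function.onFun, hPdef, disjoint_left]
    intro x hxi hxj
    rw [hP i x] at hxi
    rw [hP j x] at hxj
    exact hij (ha.injective (hxi.2.symm.trans hxj.2))
  have hstep : ∀ j : Fin (k + 1), F (j : ℕ) ⊆ F (j + 1 : ℕ) := by
    rintro ⟨v, hv⟩
    show F v ⊆ F (v + 1)
    match v, hv with
    | 0, hv => rw [hF0]; exact empty_subset _
    | u + 1, hv =>
      have hu : u < k + 1 := by omega
      intro x hx
      rw [hF1 u hu] at hx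
      rw [hF1 (u + 1) hv]
      exact ⟨hx.1, hx.2.trans (ha.monotone (show (⟨u, hu⟩ : Fin (k + 1)) ≤ ⟨u + 1, hv⟩ from
        Nat.le_succ u))⟩
  have hPE : ⋃ j, P j = M.E := by
    apply subset_antisymm
    · exact iUnion_subset fun j => (diff_subset).trans (hFE1 j)
    · intro x hx
      have : ω x ∈ Set.range a := by rw [← hvals]; exact mem_image_of_mem ω hx
      obtain ⟨m, hm⟩ := this
      exact mem_iUnion.mpr ⟨m, (hP m x).mpr ⟨hx, hm.symm⟩⟩
  have hFtop : F (k + 1) = M.E := by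
    rw [hF1 k (Nat.lt_succ_self k)]
    apply subset_antisymm (sep_subset _ _)
    intro x hx
    have : ω x ∈ Set.range a := by rw [← hvals]; exact mem_image_of_mem ω hx
    obtain ⟨m, hm⟩ := this
    have hmk : m ≤ (⟨k, Nat.lt_succ_self k⟩ : Fin (k + 1)) := show (m : ℕ) ≤ k by omega
    exact ⟨hx, by rw [← hm]; exact ha.monotone hmk⟩
  have hNE : ∀ j, (N j).E = P j := fun j => rfl
  have hdisjN : Pairwise (Function.onFun Disjoint fun j => (N j).E) := hPdisj
  have hbasisF : ∀ B : Set α,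
      (∀ j : Fin (k + 1), M.IsBasis (B ∩ F (j + 1 : ℕ)) (F (j + 1 : ℕ))) →
      ∀ v, v ≤ k + 1 → M.IsBasis (B ∩ F v) (F v) := by
    intro B hb v hv
    match v, hv with
    | 0, _ =>
      rw [hF0, inter_empty, empty_isBasis_iff]
      exact empty_subset _
    | u + 1, hv => exact hb ⟨u, by omega⟩
  have hC : ∀ j : Fin (k + 1), F (j : ℕ) ⊆ (M ↾ F (j + 1 : ℕ)).E := fun j => hstep j
  have hsplitB : ∀ (B : Set α) (j : Fin (k + 1)),
      (B ∩ P j) ∪ (B ∩ F (j : ℕ)) = B ∩ F (j + 1 : ℕ) := by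
    intro B j
    have hst := hstep j
    ext x
    simp only [hPdef, mem_union, mem_inter_iff, mem_diff]
    constructor
    · rintro (⟨h1, h2, -⟩ | ⟨h1, h2⟩)
      · exact ⟨h1, h2⟩
      · exact ⟨h1, hst h2⟩
    · rintro ⟨h1, h2⟩
      by_cases hx : x ∈ F (j : ℕ)
      · exact Or.inr ⟨h1, hx⟩
      · exact Or.inl ⟨h1, h2, hx⟩
  have hkey : ∀ B, B ⊆ M.E → (IsMinBase M ω B ↔ ∀ j, (N j).IsBase (B ∩ P j)) := by
    intro B hBE
    rw [isMinBase_iff' M hfin ω k a ha hvals F hF0 hFsub]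
    constructor
    · rintro ⟨hB, hbasis⟩ j
      rw [hN]
      refine (contract_base_iff' (M ↾ F (j + 1 : ℕ)) (hC j)).mpr
        ⟨inter_subset_right, B ∩ F (j : ℕ), ?_, ?_⟩
      · rw [isBasis_restrict_iff (hFE1 j)]
        exact ⟨hbasisF B hbasis (j : ℕ) (by omega), hstep j⟩
      · rw [hsplitB B j]
        exact (hbasis j).isBase_restrict
    · intro h
      have claim : ∀ v, v ≤ k + 1 → M.IsBasis (B ∩ F v) (F v) := by
        intro v
        induction v with
        | zero =>
          intro _
          rw [hF0, inter_empty, empty_isBasis_iff]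
          exact empty_subset _
        | succ u ih =>
          intro hu1
          have hu : u < k + 1 := by omega
          have ihb := ih (by omega)
          set j : Fin (k + 1) := ⟨u, hu⟩ with hj
          have hJ₀ : (M ↾ F (j + 1 : ℕ)).IsBasis (B ∩ F (j : ℕ)) (F (j : ℕ)) := by
            rw [isBasis_restrict_iff (hFE1 j)]
            exact ⟨ihb, hstep j⟩
          have hfinR : (M ↾ F (j + 1 : ℕ)).E.Finite := hfin.subset (hFE1 j)
          have hbase := contract_base_forall' hfinR (hC j) (h j) hJ₀
          rw [hsplitB B j] at hbase
          have := (isBase_restrict_iff (hFE1 j)).mp hbase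
          exact this
      have hBbase : M.IsBase B := by
        have := claim (k + 1) le_rfl
        rw [hFtop, inter_eq_left.mpr hBE] at this
        exact isBasis_ground_iff.mp this
      exact ⟨hBbase, fun j => claim ((j : ℕ) + 1) (by omega)⟩
  have hMω_eq : Mω = Matroid.disjointSigma N hdisjN := by
    refine ext_isBase (by rw [hMωE, disjointSigma_ground_eq]; exact hPE.symm) ?_
    intro B hBE
    rw [hMωE] at hBE
    rw [hMωBase, hkey B hBE, disjointSigma_isBase_iff]
    exact ⟨fun h => ⟨h, by rw [show ⋃ i, (N i).E = M.E from hPE]; exact hBE⟩, fun h => h.1⟩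
  have part1fin : ∀ S : Set α, S ⊆ M.E →
      (Mω.IsFlat S ↔ ∀ j : Fin (k + 1), (N j).IsFlat (S ∩ P j)) := by
    intro S hS
    rw [hMω_eq, disjointSigma_flat_iff' N hdisjN (by rw [show ⋃ i, (N i).E = M.E from hPE]; exact hS)]
    exact Iff.rfl
  have part1 : ∀ S : Set α, S ⊆ M.E →
      (Mω.IsFlat S ↔ ∀ i ∈ Finset.Icc 1 (k + 1),
        ((M ↾ F i).dualContract (F (i - 1))).IsFlat (S ∩ (F i \ F (i - 1)))) := by
    intro S hS
    rw [part1fin S hS]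
    constructor
    · intro h i hi
      rw [Finset.mem_Icc] at hi
      obtain ⟨v, rfl⟩ : ∃ v, i = v + 1 := ⟨i - 1, by omega⟩
      have hv : v < k + 1 := by omega
      have := h ⟨v, hv⟩
      simpa [Nat.add_sub_cancel] using this
    · intro h j
      have := h ((j : ℕ) + 1) (Finset.mem_Icc.mpr ⟨by omega, by omega⟩)
      simpa [Nat.add_sub_cancel] using this
  refine ⟨part1, ?_⟩
  have hSsub : ∀ S : {S : Set α // Mω.IsFlat S}, (S : Set α) ⊆ M.E := by
    intro S
    have := S.2.subset_ground
    rwa [hMωE] at this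
  have hcompP : ∀ (T : Fin (k + 1) → Set α), (∀ j, T j ⊆ P j) →
      ∀ j, (⋃ l, T l) ∩ P j = T j := by
    intro T hT j
    ext x
    simp only [mem_inter_iff, mem_iUnion]
    constructor
    · rintro ⟨⟨l, hxl⟩, hxP⟩
      rcases eq_or_ne l j with rfl | hne
      · exact hxl
      · exact absurd rfl ((hPdisj hne).ne_of_mem (hT l hxl) hxP)
    · exact fun hx => ⟨⟨j, hx⟩, hT j hx⟩
  refine ⟨⟨⟨fun S j => ⟨(S : Set α) ∩ P j, (part1fin S.1 (hSsub S)).mp S.2 j⟩,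
    fun T => ⟨⋃ j, (T j : Set α), ?_⟩, ?_, ?_⟩, ?_⟩, fun S i => rfl⟩
  · -- flatness of the union
    have hTP : ∀ j, (T j : Set α) ⊆ P j := fun j => (T j).2.subset_ground
    refine (part1fin _ (iUnion_subset fun j => (hTP j).trans (diff_subset.trans (hFE1 j)))).mpr ?_
    intro j
    rw [hcompP (fun l => (T l : Set α)) hTP j]
    exact (T j).2
  · -- left inverse
    intro S
    apply Subtype.ext
    show ⋃ j, ((S : Set α) ∩ P j) = (S : Set α)
    rw [← inter_iUnion, hPE, inter_eq_left.mpr (hSsub S)]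
  · -- right inverse
    intro T
    funext j
    apply Subtype.ext
    show (⋃ l, ((T l) : Set α)) ∩ P j = (T j : Set α)
    exact hcompP (fun l => (T l : Set α)) (fun l => (T l).2.subset_ground) j
  · -- map_rel_iff
    intro S S'
    constructor
    · intro h
      show (S : Set α) ⊆ (S' : Set α)
      intro x hx
      have hxE : x ∈ M.E := hSsub S hx
      obtain ⟨j, hj⟩ := mem_iUnion.mp (hPE ▸ hxE)
      have := h j
      have hle : (S : Set α) ∩ P j ⊆ (S' : Set α) ∩ P j := this
      exact (hle ⟨hx, hj⟩).1
    · intro h j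
      show (S : Set α) ∩ P j ⊆ (S' : Set α) ∩ P j
      exact inter_subset_inter_left _ h
end

section
/- Let M be a matroid on a finite ground set E, and let F, G, G′, H be flats of M with F ⊂ G ⊂ H, F ⊂ G′ ⊂ H, G ≠ G′, r(G) = r(G′) = r(F) + 1 and r(H) = r(F) + 2. Then G ∪ G′ = H if and only if G and G′ are the only flats K of M with F ⊊ K ⊊ H. -/
open Matroid

/-- The rank of a set `X` in a matroid `M` : the maximum cardinality of an
independent subset of `X`. -/
noncomputable def matRank {α : Type*} (M : Matroid α) (X : Set α) : ℕ :=
  sSup {n : ℕ | ∃ I, M.Indep I ∧ I ⊆ X ∧ I.ncard = n}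

private lemma flat_closure' {α : Type*} (M : Matroid α) (X : Set α) :
    M.IsFlat (M.closure X) := by
  simp

private lemma matRank_eq_of_basis {α : Type*} {M : Matroid α} (hfin : M.E.Finite)
    {I X : Set α} (hI : M.IsBasis I X) : matRank M X = I.ncard := by
  have hXE : X ⊆ M.E := hI.subset_ground
  have hub : ∀ n ∈ {n : ℕ | ∃ J, M.Indep J ∧ J ⊆ X ∧ J.ncard = n}, n ≤ I.ncard := by
    rintro n ⟨J, hJ, hJX, rfl⟩
    obtain ⟨J', hJ', hJJ'⟩ := hJ.subset_isBasis_of_subset hJX hXE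
    have hcard : J'.ncard = I.ncard := by
      rw [Set.ncard_def, hJ'.encard_eq_encard hI, ← Set.ncard_def]
    calc J.ncard ≤ J'.ncard := Set.ncard_le_ncard hJJ' (hfin.subset hJ'.indep.subset_ground)
      _ = I.ncard := hcard
  have hmem : I.ncard ∈ {n : ℕ | ∃ J, M.Indep J ∧ J ⊆ X ∧ J.ncard = n} :=
    ⟨I, hI.indep, hI.subset, rfl⟩
  exact le_antisymm (csSup_le ⟨I.ncard, hmem⟩ hub) (le_csSup ⟨I.ncard, hub⟩ hmem)

private lemma matRank_mono {α : Type*} {M : Matroid α} (hfin : M.E.Finite)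
    {X Y : Set α} (hXY : X ⊆ Y) (hY : Y ⊆ M.E) : matRank M X ≤ matRank M Y := by
  obtain ⟨I, J, hI, hJ, hIJ⟩ := M.exists_isBasis_subset_isBasis hXY hY
  rw [matRank_eq_of_basis hfin hI, matRank_eq_of_basis hfin hJ]
  exact Set.ncard_le_ncard hIJ (hfin.subset hJ.indep.subset_ground)

private lemma matRank_closure_insert {α : Type*} {M : Matroid α} (hfin : M.E.Finite)
    {F : Set α} {x : α} (hF : M.IsFlat F) (hxE : x ∈ M.E) (hxF : x ∉ F) :
    matRank M (M.closure (insert x F)) = matRank M F + 1 := by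
  obtain ⟨I, hI⟩ := M.exists_isBasis F hF.subset_ground
  have hclI : M.closure I = F := by rw [hI.closure_eq_closure, hF.closure]
  have hxI : x ∉ M.closure I := by rw [hclI]; exact hxF
  have hind : M.Indep (insert x I) := by
    rw [hI.indep.insert_indep_iff_of_notMem (fun h => hxF (hI.subset h))]
    exact ⟨hxE, hxI⟩
  have hcl : M.closure (insert x I) = M.closure (insert x F) := by
    rw [← M.closure_insert_closure_eq_closure_insert, hclI]
  have hbas : M.IsBasis (insert x I) (M.closure (insert x F)) := hcl ▸ hind.isBasis_closure
  rw [matRank_eq_of_basis hfin hbas, matRank_eq_of_basis hfin hI,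
    Set.ncard_insert_of_notMem (fun h => hxF (hI.subset h))
      (hfin.subset hI.indep.subset_ground)]

private lemma matRank_lt_of_flat_ssubset {α : Type*} {M : Matroid α} (hfin : M.E.Finite)
    {K₁ K₂ : Set α} (h₁ : M.IsFlat K₁) (h₂ : M.IsFlat K₂) (hss : K₁ ⊂ K₂) :
    matRank M K₁ < matRank M K₂ := by
  obtain ⟨x, hxK₂, hxK₁⟩ := Set.exists_of_ssubset hss
  have hxE : x ∈ M.E := h₂.subset_ground hxK₂
  have hsub : M.closure (insert x K₁) ⊆ K₂ := by
    rw [← h₂.closure]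
    exact M.closure_subset_closure (Set.insert_subset hxK₂ hss.subset)
  have := matRank_mono hfin hsub h₂.subset_ground
  rw [matRank_closure_insert hfin h₁ hxE hxK₁] at this
  omega

private lemma flat_eq_of_subset_of_matRank_eq {α : Type*} {M : Matroid α} (hfin : M.E.Finite)
    {K₁ K₂ : Set α} (h₁ : M.IsFlat K₁) (h₂ : M.IsFlat K₂) (hss : K₁ ⊆ K₂)
    (hr : matRank M K₁ = matRank M K₂) : K₁ = K₂ := by
  by_contra hne
  exact absurd hr (Nat.ne_of_lt (matRank_lt_of_flat_ssubset hfin h₁ h₂ ⟨hss, fun h => hne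
    (hss.antisymm h)⟩))

/-- Let `F ⊂ G ⊂ H` and `F ⊂ G' ⊂ H` be flats of a matroid `M` on a finite ground set,
with `G ≠ G'`, `r G = r G' = r F + 1` and `r H = r F + 2`.  Then `G ∪ G' = H` if and
only if `G` and `G'` are the only flats strictly between `F` and `H`, i.e. the interval
`[F, H]` in the lattice of flats is a diamond. -/
theorem union_eq_top_iff_diamond {α : Type*} (M : Matroid α) (hfin : M.E.Finite)
    (F G G' H : Set α)
    (hF : M.IsFlat F) (hG : M.IsFlat G) (hG' : M.IsFlat G') (hH : M.IsFlat H)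
    (hFG : F ⊂ G) (hGH : G ⊂ H) (hFG' : F ⊂ G') (hG'H : G' ⊂ H) (hne : G ≠ G')
    (hrG : matRank M G = matRank M F + 1) (hrG' : matRank M G' = matRank M F + 1)
    (hrH : matRank M H = matRank M F + 2) :
    G ∪ G' = H ↔ ∀ K : Set α, M.IsFlat K → F ⊂ K → K ⊂ H → K = G ∨ K = G' := by
  constructor
  · intro hUnion K hK hFK hKH
    -- rank of K is r F + 1
    have hrK : matRank M K = matRank M F + 1 := by
      have h1 := matRank_lt_of_flat_ssubset hfin hF hK hFK
      have h2 := matRank_lt_of_flat_ssubset hfin hK hH hKH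
      omega
    obtain ⟨x, hxK, hxF⟩ := Set.exists_of_ssubset hFK
    have hxE : x ∈ M.E := hK.subset_ground hxK
    have hxH : x ∈ H := hKH.subset hxK
    set K₀ := M.closure (insert x F) with hK₀def
    have hK₀flat : M.IsFlat K₀ := flat_closure' M _
    have hrK₀ : matRank M K₀ = matRank M F + 1 := matRank_closure_insert hfin hF hxE hxF
    have hK₀K : K₀ = K := by
      refine flat_eq_of_subset_of_matRank_eq hfin hK₀flat hK ?_ (by rw [hrK₀, hrK])
      rw [← hK.closure]
      exact M.closure_subset_closure (Set.insert_subset hxK hFK.subset)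
    rw [← hUnion] at hxH
    rcases hxH with hxG | hxG'
    · left
      rw [← hK₀K]
      refine flat_eq_of_subset_of_matRank_eq hfin hK₀flat hG ?_ (by rw [hrK₀, hrG])
      rw [← hG.closure]
      exact M.closure_subset_closure (Set.insert_subset hxG (hFG.subset))
    · right
      rw [← hK₀K]
      refine flat_eq_of_subset_of_matRank_eq hfin hK₀flat hG' ?_ (by rw [hrK₀, hrG'])
      rw [← hG'.closure]
      exact M.closure_subset_closure (Set.insert_subset hxG' (hFG'.subset))
  · intro h
    refine subset_antisymm (Set.union_subset hGH.subset hG'H.subset) ?_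
    intro x hxH
    by_contra hx
    have hxE : x ∈ M.E := hH.subset_ground hxH
    have hxF : x ∉ F := fun hxF => hx (Or.inl (hFG.subset hxF))
    set K₀ := M.closure (insert x F) with hK₀def
    have hK₀flat : M.IsFlat K₀ := flat_closure' M _
    have hrK₀ : matRank M K₀ = matRank M F + 1 := matRank_closure_insert hfin hF hxE hxF
    have hxK₀ : x ∈ K₀ :=
      M.subset_closure (insert x F) (Set.insert_subset hxE hF.subset_ground)
        (Set.mem_insert x F)
    have hFK₀ : F ⊂ K₀ := by
      refine ⟨(M.subset_closure F hF.subset_ground).trans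
        (M.closure_subset_closure (Set.subset_insert x F)), fun hsub => hxF (hsub hxK₀)⟩
    have hK₀H : K₀ ⊂ H := by
      refine ⟨?_, fun hsub => ?_⟩
      · rw [← hH.closure]
        exact M.closure_subset_closure (Set.insert_subset hxH (hFG.subset.trans hGH.subset))
      · have := matRank_mono hfin hsub hK₀flat.subset_ground
        omega
    rcases h K₀ hK₀flat hFK₀ hK₀H with rfl | rfl
    · exact hx (Or.inl hxK₀)
    · exact hx (Or.inr hxK₀)
end
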